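/- Let $H = \sum_{\alpha=1}^m h_\alpha$ be a sum of Hermitian operators on $(\mathbb{C}^2)^{\otimes n}$, each $h_\alpha$ acting nontrivially on exactly $k$ qubits, with $M := \sum_\alpha \|h_\alpha\|$. Then for any $\varepsilon > 0$, the number of eigenvalues of $H$ (with multiplicity) that are at most $E_0(H) + \varepsilon M$ is at least $2^{\lfloor \varepsilon n/(2k+\varepsilon) \rfloor}$, where $E_0(H)$ is the minimum eigenvalue of $H$. -/

import Mathlib

/-!
Averaging the load `∑_{α : q ∈ S_α} ‖h_α‖` over the qubits `q` gives a set `T` of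
`d = ⌊εn/(2k+ε)⌋` qubits met by terms of total norm `W ≤ dkM/n ≤ εM/2`. The remaining terms
act as `1_T ⊗ R`, so `H = 1_T ⊗ R + B` with `‖B‖ ≤ W`. Hence `E₀(H) ≥ E₀(R) - W`, while for a
ground state `χ` of `R` every product state `u ⊗ χ` has energy at most `E₀(R) + W ≤ E₀(H) + 2W`.
These states form a subspace of dimension `2^d`, so by the min-max principle `H` has at least
`2^d` eigenvalues in `[E₀(H), E₀(H) + εM]`.
-/

open Matrix

/-- `A` acts (possibly) nontrivially only on the qubits in `S`: entries vanish when the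
inputs disagree outside `S`, and otherwise depend only on the coordinates in `S`. -/
def LocalTo {n : ℕ} (A : Matrix (Fin n → Fin 2) (Fin n → Fin 2) ℂ)
    (S : Finset (Fin n)) : Prop :=
  (∀ x y, (∃ i ∉ S, x i ≠ y i) → A x y = 0) ∧
  (∀ x y x' y', (∀ i ∈ S, x i = x' i) → (∀ i ∈ S, y i = y' i) →
    (∀ i ∉ S, x i = y i) → (∀ i ∉ S, x' i = y' i) → A x y = A x' y')

open Finset WithLp
open scoped InnerProductSpace Kronecker

section

variable {𝕜 : Type*} [RCLike 𝕜]

lemma abs_re_inner_apply_le {E : Type*} [NormedAddCommGroup E] [InnerProductSpace 𝕜 E]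
    (T : E →L[𝕜] E) (x : E) : |RCLike.re ⟪x, T x⟫_𝕜| ≤ ‖T‖ * ‖x‖ ^ 2 :=
  calc |RCLike.re ⟪x, T x⟫_𝕜| ≤ ‖⟪x, T x⟫_𝕜‖ := RCLike.abs_re_le_norm _
    _ ≤ ‖x‖ * ‖T x‖ := norm_inner_le_norm _ _
    _ ≤ ‖x‖ * (‖T‖ * ‖x‖) := by gcongr; exact T.le_opNorm x
    _ = ‖T‖ * ‖x‖ ^ 2 := by ring

lemma abs_re_inner_submatrix_add_sub_le {ι κ : Type*} [Fintype ι] [Fintype κ] [DecidableEq ι]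
    [DecidableEq κ] (A : Matrix κ κ 𝕜) (B : Matrix ι ι 𝕜) (e : ι ≃ κ) (x : EuclideanSpace 𝕜 ι) :
    |RCLike.re ⟪x, toEuclideanCLM (𝕜 := 𝕜) (A.submatrix e e + B) x⟫_𝕜 -
        RCLike.re ⟪LinearIsometryEquiv.piLpCongrLeft 2 𝕜 𝕜 e x,
          toEuclideanCLM (𝕜 := 𝕜) A (LinearIsometryEquiv.piLpCongrLeft 2 𝕜 𝕜 e x)⟫_𝕜| ≤
      ‖toEuclideanCLM (𝕜 := 𝕜) B‖ * ‖x‖ ^ 2 := by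
  set L := LinearIsometryEquiv.piLpCongrLeft 2 𝕜 𝕜 e
  have hAe : toEuclideanCLM (𝕜 := 𝕜) (A.submatrix e e) x =
      L.symm (toEuclideanCLM (𝕜 := 𝕜) A (L x)) := by
    ext i
    simp only [L, ofLp_toEuclideanCLM, LinearIsometryEquiv.piLpCongrLeft_symm,
      LinearIsometryEquiv.piLpCongrLeft_apply, mulVec, dotProduct, submatrix_apply]
    exact Fintype.sum_equiv e _ _ fun j => by simp
  rw [map_add, _root_.add_apply, inner_add_right, map_add, hAe, ← L.inner_map_eq_flip,
    add_sub_cancel_left]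
  exact abs_re_inner_apply_le _ x

namespace EuclideanSpace
variable {α β : Type*} [Fintype α] [Fintype β]

def slice (x : EuclideanSpace 𝕜 (α × β)) (a : α) : EuclideanSpace 𝕜 β :=
  toLp 2 fun b => x (a, b)

def tensorRight (χ : EuclideanSpace 𝕜 β) : EuclideanSpace 𝕜 α →ₗ[𝕜] EuclideanSpace 𝕜 (α × β) where
  toFun u := toLp 2 fun p => u p.1 * χ p.2
  map_add' u u' := by ext p; simp [add_mul]
  map_smul' c u := by ext p; simp [mul_assoc]

lemma inner_eq_sum_inner_slice (x y : EuclideanSpace 𝕜 (α × β)) :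
    ⟪x, y⟫_𝕜 = ∑ a, ⟪slice x a, slice y a⟫_𝕜 := by
  simp only [PiLp.inner_apply, slice, Fintype.sum_prod_type]

lemma norm_sq_eq_sum_norm_sq_slice (x : EuclideanSpace 𝕜 (α × β)) :
    ‖x‖ ^ 2 = ∑ a, ‖slice x a‖ ^ 2 := by
  simp only [EuclideanSpace.norm_sq_eq, slice, Fintype.sum_prod_type]

lemma inner_tensorRight (χ χ' : EuclideanSpace 𝕜 β) (u u' : EuclideanSpace 𝕜 α) :
    ⟪tensorRight χ u, tensorRight χ' u'⟫_𝕜 = ⟪u, u'⟫_𝕜 * ⟪χ, χ'⟫_𝕜 := by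
  simp only [tensorRight, LinearMap.coe_mk, AddHom.coe_mk, PiLp.inner_apply, RCLike.inner_apply,
    Fintype.sum_prod_type, Finset.sum_mul_sum, map_mul]
  exact Finset.sum_congr rfl fun _ _ => Finset.sum_congr rfl fun _ _ => by ring

lemma norm_tensorRight (χ : EuclideanSpace 𝕜 β) (u : EuclideanSpace 𝕜 α) :
    ‖tensorRight χ u‖ = ‖u‖ * ‖χ‖ := by
  rw [@norm_eq_sqrt_re_inner 𝕜, inner_tensorRight, inner_self_eq_norm_sq_to_K,
    inner_self_eq_norm_sq_to_K]
  norm_cast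
  rw [← mul_pow, Real.sqrt_sq (by positivity)]

lemma tensorRight_injective {χ : EuclideanSpace 𝕜 β} (hχ : χ ≠ 0) :
    Function.Injective (tensorRight (𝕜 := 𝕜) (α := α) χ) :=
  (injective_iff_map_eq_zero _).2 fun u hu => by
    have h := norm_tensorRight χ u
    rw [hu, norm_zero, eq_comm, mul_eq_zero, norm_eq_zero, norm_eq_zero] at h
    exact h.resolve_right hχ

variable [DecidableEq α] [DecidableEq β]

lemma slice_toEuclideanCLM_one_kronecker (B : Matrix β β 𝕜) (x : EuclideanSpace 𝕜 (α × β)) (a : α) :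
    slice (toEuclideanCLM (𝕜 := 𝕜) ((1 : Matrix α α 𝕜) ⊗ₖ B) x) a =
      toEuclideanCLM (𝕜 := 𝕜) B (slice x a) := by
  ext b
  simp [slice, mulVec, dotProduct, Fintype.sum_prod_type, one_apply, ite_mul]

lemma toEuclideanCLM_one_kronecker_tensorRight (B : Matrix β β 𝕜) (χ : EuclideanSpace 𝕜 β)
    (u : EuclideanSpace 𝕜 α) :
    toEuclideanCLM (𝕜 := 𝕜) ((1 : Matrix α α 𝕜) ⊗ₖ B) (tensorRight χ u) =
      tensorRight (toEuclideanCLM (𝕜 := 𝕜) B χ) u := by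
  ext p
  simp only [tensorRight, LinearMap.coe_mk, AddHom.coe_mk, toEuclideanCLM_toLp, mulVec,
    dotProduct, kroneckerMap_apply, one_apply, ite_mul, one_mul, zero_mul, Fintype.sum_prod_type,
    sum_ite_irrel, sum_const_zero, sum_ite_eq, mem_univ, if_true, ofLp_toEuclideanCLM, mul_sum]
  exact Finset.sum_congr rfl fun _ _ => by ring

lemma mul_norm_sq_le_re_inner_one_kronecker {B : Matrix β β 𝕜} {c : ℝ}
    (hB : ∀ y, c * ‖y‖ ^ 2 ≤ RCLike.re ⟪y, toEuclideanCLM (𝕜 := 𝕜) B y⟫_𝕜)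
    (x : EuclideanSpace 𝕜 (α × β)) :
    c * ‖x‖ ^ 2 ≤ RCLike.re ⟪x, toEuclideanCLM (𝕜 := 𝕜) ((1 : Matrix α α 𝕜) ⊗ₖ B) x⟫_𝕜 := by
  rw [inner_eq_sum_inner_slice, norm_sq_eq_sum_norm_sq_slice, map_sum, Finset.mul_sum]
  gcongr with a
  rw [slice_toEuclideanCLM_one_kronecker]
  exact hB _

lemma re_inner_one_kronecker_tensorRight (B : Matrix β β 𝕜) (χ : EuclideanSpace 𝕜 β)
    (u : EuclideanSpace 𝕜 α) :
    RCLike.re ⟪tensorRight χ u,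
        toEuclideanCLM (𝕜 := 𝕜) ((1 : Matrix α α 𝕜) ⊗ₖ B) (tensorRight χ u)⟫_𝕜 =
      ‖u‖ ^ 2 * RCLike.re ⟪χ, toEuclideanCLM (𝕜 := 𝕜) B χ⟫_𝕜 := by
  rw [toEuclideanCLM_one_kronecker_tensorRight, inner_tensorRight, inner_self_eq_norm_sq_to_K]
  norm_cast
  rw [RCLike.re_ofReal_mul]

end EuclideanSpace

namespace Matrix.IsHermitian
variable {ι : Type*} [Fintype ι] [DecidableEq ι] {A : Matrix ι ι 𝕜}
  (hA : A.IsHermitian)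

lemma toEuclideanCLM_eigenvectorBasis (v : ι) :
    toEuclideanCLM (𝕜 := 𝕜) A (hA.eigenvectorBasis v) =
      (hA.eigenvalues v : 𝕜) • hA.eigenvectorBasis v := by
  ext1
  rw [ofLp_toEuclideanCLM, hA.mulVec_eigenvectorBasis, ofLp_smul,
    RCLike.real_smul_eq_coe_smul (K := 𝕜)]

lemma inner_eigenvectorBasis_toEuclideanCLM (v : ι) (x : EuclideanSpace 𝕜 ι) :
    ⟪hA.eigenvectorBasis v, toEuclideanCLM (𝕜 := 𝕜) A x⟫_𝕜 =
      hA.eigenvalues v * ⟪hA.eigenvectorBasis v, x⟫_𝕜 := by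
  have hsymm := (IsSelfAdjoint.map hA (toEuclideanCLM (𝕜 := 𝕜))).isSymmetric
    (hA.eigenvectorBasis v) x
  simp only [ContinuousLinearMap.coe_coe] at hsymm
  rw [← hsymm, toEuclideanCLM_eigenvectorBasis, inner_smul_left, RCLike.conj_ofReal]

theorem re_inner_toEuclideanCLM (x : EuclideanSpace 𝕜 ι) :
    RCLike.re ⟪x, toEuclideanCLM (𝕜 := 𝕜) A x⟫_𝕜 =
      ∑ v, hA.eigenvalues v * ‖⟪hA.eigenvectorBasis v, x⟫_𝕜‖ ^ 2 := by
  rw [← hA.eigenvectorBasis.sum_inner_mul_inner, map_sum]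
  refine Finset.sum_congr rfl fun v _ => ?_
  rw [inner_eigenvectorBasis_toEuclideanCLM, ← inner_conj_symm, mul_left_comm, RCLike.conj_mul]
  norm_cast

theorem mul_norm_sq_le_re_inner_toEuclideanCLM {c : ℝ} (hc : ∀ v, c ≤ hA.eigenvalues v)
    (x : EuclideanSpace 𝕜 ι) :
    c * ‖x‖ ^ 2 ≤ RCLike.re ⟪x, toEuclideanCLM (𝕜 := 𝕜) A x⟫_𝕜 := by
  rw [hA.re_inner_toEuclideanCLM, ← hA.eigenvectorBasis.sum_sq_norm_inner_right, Finset.mul_sum]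
  gcongr with v
  exact hc v

theorem re_inner_toEuclideanCLM_eigenvectorBasis (v : ι) :
    RCLike.re ⟪hA.eigenvectorBasis v, toEuclideanCLM (𝕜 := 𝕜) A (hA.eigenvectorBasis v)⟫_𝕜 =
      hA.eigenvalues v := by
  rw [inner_eigenvectorBasis_toEuclideanCLM, inner_self_eq_norm_sq_to_K,
    hA.eigenvectorBasis.orthonormal.1 v]
  simp

theorem le_eigenvalues_of_mul_norm_sq_le {c : ℝ}
    (hc : ∀ x, c * ‖x‖ ^ 2 ≤ RCLike.re ⟪x, toEuclideanCLM (𝕜 := 𝕜) A x⟫_𝕜) (v : ι) :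
    c ≤ hA.eigenvalues v := by
  simpa [hA.eigenvectorBasis.orthonormal.1 v, re_inner_toEuclideanCLM_eigenvectorBasis]
    using hc (hA.eigenvectorBasis v)

theorem finrank_le_card_eigenvalues_le {t : ℝ} (V : Submodule 𝕜 (EuclideanSpace 𝕜 ι))
    (hV : ∀ x ∈ V, RCLike.re ⟪x, toEuclideanCLM (𝕜 := 𝕜) A x⟫_𝕜 ≤ t * ‖x‖ ^ 2) :
    Module.finrank 𝕜 V ≤ (Finset.univ.filter fun v => hA.eigenvalues v ≤ t).card := by
  set low := Finset.univ.filter fun v => hA.eigenvalues v ≤ t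
  -- A nonzero `x ∈ V` orthogonal to the eigenvectors of `low` has Rayleigh quotient `> t`.
  by_contra! hlt
  let coeffs : V →ₗ[𝕜] low → 𝕜 :=
    (LinearMap.pi fun v : low => innerₛₗ 𝕜 (hA.eigenvectorBasis v)) ∘ₗ V.subtype
  obtain ⟨⟨x, hxV⟩, hx, hx0⟩ := Submodule.exists_mem_ne_zero_of_ne_bot
    (LinearMap.ker_ne_bot_of_finrank_lt (f := coeffs) (by simpa using hlt))
  have hlow : ∀ v, hA.eigenvalues v ≤ t → ⟪hA.eigenvectorBasis v, x⟫_𝕜 = 0 := fun v hv =>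
    congrFun hx ⟨v, Finset.mem_filter.2 ⟨Finset.mem_univ v, hv⟩⟩
  have hpos : 0 < ∑ v, (hA.eigenvalues v - t) * ‖⟪hA.eigenvectorBasis v, x⟫_𝕜‖ ^ 2 := by
    have hx' : x ≠ 0 := fun h => hx0 (Subtype.ext h)
    obtain ⟨v, -, hv⟩ : ∃ v ∈ Finset.univ, ‖⟪hA.eigenvectorBasis v, x⟫_𝕜‖ ^ 2 ≠ 0 :=
      Finset.exists_ne_zero_of_sum_ne_zero (by
        rw [hA.eigenvectorBasis.sum_sq_norm_inner_right]; positivity)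
    refine Finset.sum_pos' (fun w _ => ?_) ⟨v, Finset.mem_univ v, ?_⟩
    · rcases le_or_gt (hA.eigenvalues w) t with hw | hw
      · simp [hlow w hw]
      · exact mul_nonneg (sub_pos.2 hw).le (by positivity)
    · have htv : t < hA.eigenvalues v := not_le.1 fun h => hv (by simp [hlow v h])
      exact mul_pos (sub_pos.2 htv) (lt_of_le_of_ne (by positivity) (Ne.symm hv))
  have := hV x hxV
  rw [hA.re_inner_toEuclideanCLM, ← hA.eigenvectorBasis.sum_sq_norm_inner_right,
    Finset.mul_sum] at this
  simp only [sub_mul, Finset.sum_sub_distrib] at hpos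
  linarith

end Matrix.IsHermitian

theorem sub_le_iInf_eigenvalues_of_eq_one_kronecker_add {ι α β : Type*} [Fintype ι]
    [DecidableEq ι] [Nonempty ι] [Fintype α] [DecidableEq α] [Fintype β] [DecidableEq β]
    {H B : Matrix ι ι 𝕜} {R : Matrix β β 𝕜} (hH : H.IsHermitian) (hR : R.IsHermitian)
    (e : ι ≃ α × β) (hHRB : H = ((1 : Matrix α α 𝕜) ⊗ₖ R).submatrix e e + B) {c : ℝ}
    (hc : ∀ v, c ≤ hR.eigenvalues v) :
    c - ‖toEuclideanCLM (𝕜 := 𝕜) B‖ ≤ ⨅ w, hH.eigenvalues w := by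
  refine le_ciInf (hH.le_eigenvalues_of_mul_norm_sq_le fun x => ?_)
  set L := LinearIsometryEquiv.piLpCongrLeft 2 𝕜 𝕜 e
  have hblock := EuclideanSpace.mul_norm_sq_le_re_inner_one_kronecker (α := α)
    (hR.mul_norm_sq_le_re_inner_toEuclideanCLM hc) (L x)
  rw [L.norm_map] at hblock
  have hB := abs_le.1 (hHRB ▸ abs_re_inner_submatrix_add_sub_le _ B e x)
  linarith [hB.1]

open EuclideanSpace in
theorem card_le_card_eigenvalues_le_of_eq_one_kronecker_add {ι α β : Type*} [Fintype ι]
    [DecidableEq ι] [Nonempty ι] [Fintype α] [DecidableEq α] [Fintype β] [DecidableEq β]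
    {H B : Matrix ι ι 𝕜} {R : Matrix β β 𝕜} (hH : H.IsHermitian) (hR : R.IsHermitian)
    (e : ι ≃ α × β) (hHRB : H = ((1 : Matrix α α 𝕜) ⊗ₖ R).submatrix e e + B) {W : ℝ}
    (hB : ‖toEuclideanCLM (𝕜 := 𝕜) B‖ ≤ W) :
    Fintype.card α ≤
      (Finset.univ.filter fun v => hH.eigenvalues v ≤ (⨅ w, hH.eigenvalues w) + 2 * W).card := by
  have : Nonempty β := ⟨(e (Classical.arbitrary ι)).2⟩
  obtain ⟨v₀, hv₀⟩ := Finite.exists_min hR.eigenvalues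
  have hground := sub_le_iInf_eigenvalues_of_eq_one_kronecker_add hH hR e hHRB hv₀
  set χ := hR.eigenvectorBasis v₀
  have hχ : ‖χ‖ = 1 := hR.eigenvectorBasis.orthonormal.1 v₀
  set L := LinearIsometryEquiv.piLpCongrLeft 2 𝕜 𝕜 e
  let V := LinearMap.range (L.symm.toLinearEquiv.toLinearMap ∘ₗ tensorRight (α := α) χ)
  have hV : Module.finrank 𝕜 V = Fintype.card α := by
    refine (LinearMap.finrank_range_of_inj ?_).trans finrank_euclideanSpace
    exact L.symm.injective.comp (tensorRight_injective (norm_ne_zero_iff.1 (hχ ▸ one_ne_zero)))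
  rw [← hV]
  refine hH.finrank_le_card_eigenvalues_le V ?_
  rintro _ ⟨u, rfl⟩
  have hx : ‖L.symm (tensorRight χ u)‖ = ‖u‖ := by
    rw [L.symm.norm_map, norm_tensorRight, hχ, mul_one]
  simp only [LinearMap.coe_comp, Function.comp_apply, LinearEquiv.coe_coe,
    LinearIsometryEquiv.coe_toLinearEquiv] at hx ⊢
  have hquad :=
    abs_le.1 (hHRB ▸ abs_re_inner_submatrix_add_sub_le _ B e (L.symm (tensorRight χ u)))
  rw [L.apply_symm_apply, re_inner_one_kronecker_tensorRight,
    hR.re_inner_toEuclideanCLM_eigenvectorBasis, hx] at hquad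
  rw [hx]
  nlinarith [mul_le_mul_of_nonneg_right hground (sq_nonneg ‖u‖),
    mul_le_mul_of_nonneg_right hB (sq_nonneg ‖u‖)]

end

theorem Finset.exists_subset_card_eq_forall_le {γ δ : Type*} [DecidableEq γ] [LinearOrder δ]
    (f : γ → δ) (s : Finset γ) {d : ℕ} (hd : d ≤ #s) :
    ∃ T ⊆ s, #T = d ∧ ∀ a ∈ T, ∀ b ∈ s \ T, f a ≤ f b := by
  induction d with
  | zero => exact ⟨∅, empty_subset s, card_empty, by simp⟩
  | succ d ih =>
    obtain ⟨T, hTs, hT, hle⟩ := ih (by omega)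
    have hne : (s \ T).Nonempty := by
      rw [← card_pos, card_sdiff_of_subset hTs]
      omega
    obtain ⟨q, hq, hqmin⟩ := (s \ T).exists_min_image f hne
    rw [mem_sdiff] at hq
    refine ⟨insert q T, insert_subset hq.1 hTs, by rw [card_insert_of_notMem hq.2, hT], ?_⟩
    intro a ha b hb
    rw [mem_sdiff, mem_insert, not_or] at hb
    rcases mem_insert.1 ha with rfl | ha
    · exact hqmin b (mem_sdiff.2 ⟨hb.1, hb.2.2⟩)
    · exact hle a ha b (mem_sdiff.2 ⟨hb.1, hb.2.2⟩)

theorem Finset.card_mul_sum_le_of_forall_le {γ : Type*} [DecidableEq γ] {f : γ → ℝ}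
    {s T : Finset γ} (hTs : T ⊆ s) (hle : ∀ a ∈ T, ∀ b ∈ s \ T, f a ≤ f b) :
    #s * ∑ a ∈ T, f a ≤ #T * ∑ a ∈ s, f a := by
  have hout : (#(s \ T) : ℝ) * ∑ a ∈ T, f a ≤ #T * ∑ b ∈ s \ T, f b :=
    calc (#(s \ T) : ℝ) * ∑ a ∈ T, f a = ∑ _b ∈ s \ T, ∑ a ∈ T, f a := by
          rw [sum_const, nsmul_eq_mul]
      _ ≤ ∑ b ∈ s \ T, ∑ _a ∈ T, f b := sum_le_sum fun b hb => sum_le_sum fun a ha => hle a ha b hb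
      _ = #T * ∑ b ∈ s \ T, f b := by simp [mul_sum]
  rw [← card_sdiff_add_card_eq_card hTs, ← sum_sdiff hTs]
  push_cast
  linarith

theorem Finset.exists_subset_card_eq_card_mul_sum_le {γ : Type*} [DecidableEq γ] (f : γ → ℝ)
    (s : Finset γ) {d : ℕ} (hd : d ≤ #s) :
    ∃ T ⊆ s, #T = d ∧ #s * ∑ a ∈ T, f a ≤ d * ∑ a ∈ s, f a := by
  obtain ⟨T, hTs, hT, hle⟩ := exists_subset_card_eq_forall_le f s hd
  exact ⟨T, hTs, hT, hT ▸ card_mul_sum_le_of_forall_le hTs hle⟩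

theorem Finset.sum_sum_filter_mem_eq {γ δ : Type*} [Fintype γ] [DecidableEq δ] (S : γ → Finset δ)
    (w : γ → ℝ) (T : Finset δ) :
    ∑ q ∈ T, ∑ α with q ∈ S α, w α = ∑ α, #(T ∩ S α) * w α := by
  rw [sum_comm' (t' := univ) (s' := fun α => T ∩ S α) (by simp)]
  simp [sum_const]

theorem Finset.sum_filter_not_disjoint_le {γ δ : Type*} [Fintype γ] [DecidableEq δ]
    (S : γ → Finset δ) {w : γ → ℝ} (hw : ∀ α, 0 ≤ w α) (T : Finset δ) :
    ∑ α with ¬Disjoint (S α) T, w α ≤ ∑ q ∈ T, ∑ α with q ∈ S α, w α := by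
  rw [sum_sum_filter_mem_eq, sum_filter]
  gcongr with α
  split_ifs with hα
  · exact mul_nonneg (Nat.cast_nonneg _) (hw α)
  · have : (1 : ℝ) ≤ #(T ∩ S α) := by
      exact_mod_cast card_pos.2 (by rwa [inter_comm, ← not_disjoint_iff_nonempty_inter])
    nlinarith [hw α]

theorem Finset.exists_card_eq_card_mul_sum_not_disjoint_le {γ δ : Type*} [Fintype γ]
    [Fintype δ] [DecidableEq δ] (S : γ → Finset δ) {k : ℕ} (hS : ∀ α, #(S α) = k) {w : γ → ℝ}
    (hw : ∀ α, 0 ≤ w α) {d : ℕ} (hd : d ≤ Fintype.card δ) :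
    ∃ T : Finset δ, #T = d ∧
      Fintype.card δ * ∑ α with ¬Disjoint (S α) T, w α ≤ d * (k * ∑ α, w α) := by
  obtain ⟨T, -, hTd, hT⟩ :=
    exists_subset_card_eq_card_mul_sum_le (fun q => ∑ α with q ∈ S α, w α) univ hd
  refine ⟨T, hTd, ?_⟩
  calc Fintype.card δ * ∑ α with ¬Disjoint (S α) T, w α
      ≤ #(univ : Finset δ) * ∑ q ∈ T, ∑ α with q ∈ S α, w α := by
        rw [card_univ]
        gcongr
        exact sum_filter_not_disjoint_le S hw T
    _ ≤ d * (k * ∑ α, w α) := by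
        simpa only [sum_sum_filter_mem_eq _ _ univ, univ_inter, hS, ← mul_sum] using hT

abbrev qubitSplit {n : ℕ} (T : Finset (Fin n)) :
    (Fin n → Fin 2) ≃ (({i // i ∈ T} → Fin 2) × ({i // i ∉ T} → Fin 2)) :=
  Equiv.piEquivPiSubtypeProd (· ∈ T) fun _ => Fin 2

/-- The qubits of `T` are fixed to `0`; for a matrix that acts trivially on `T` any other
choice gives the same matrix. -/
def restrictOutside {n : ℕ} (T : Finset (Fin n))
    (A : Matrix (Fin n → Fin 2) (Fin n → Fin 2) ℂ) :
    Matrix ({i // i ∉ T} → Fin 2) ({i // i ∉ T} → Fin 2) ℂ :=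
  A.submatrix (fun b => (qubitSplit T).symm (0, b)) (fun b => (qubitSplit T).symm (0, b))

def ActsTriviallyOn {n : ℕ} (T : Finset (Fin n)) (A : Matrix (Fin n → Fin 2) (Fin n → Fin 2) ℂ) :
    Prop :=
  A = ((1 : Matrix ({i // i ∈ T} → Fin 2) ({i // i ∈ T} → Fin 2) ℂ) ⊗ₖ
    restrictOutside T A).submatrix (qubitSplit T) (qubitSplit T)

theorem ActsTriviallyOn.sum {n : ℕ} {T : Finset (Fin n)} {ι : Type*} {s : Finset ι}
    {A : ι → Matrix (Fin n → Fin 2) (Fin n → Fin 2) ℂ} (hA : ∀ α ∈ s, ActsTriviallyOn T (A α)) :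
    ActsTriviallyOn T (∑ α ∈ s, A α) := by
  unfold ActsTriviallyOn at *
  conv_lhs => rw [Finset.sum_congr rfl hA]
  ext x y
  simp [Matrix.sum_apply, restrictOutside, Finset.mul_sum]

theorem LocalTo.actsTriviallyOn {n : ℕ} {A : Matrix (Fin n → Fin 2) (Fin n → Fin 2) ℂ}
    {S T : Finset (Fin n)} (hA : LocalTo A S) (hST : Disjoint S T) : ActsTriviallyOn T A := by
  have hout : ∀ (z : Fin n → Fin 2) i, i ∉ T →
      (qubitSplit T).symm (0, fun j : {j // j ∉ T} => z j) i = z i :=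
    fun z i hi => by simp [Equiv.piEquivPiSubtypeProd_symm_apply, hi]
  have hin : ∀ (z : Fin n → Fin 2) i, i ∈ T →
      (qubitSplit T).symm (0, fun j : {j // j ∉ T} => z j) i = 0 :=
    fun z i hi => by simp [Equiv.piEquivPiSubtypeProd_symm_apply, hi]
  ext x y
  simp only [submatrix_apply, kroneckerMap_apply, one_apply, restrictOutside, ite_mul, one_mul,
    zero_mul, Equiv.piEquivPiSubtypeProd_apply]
  split_ifs with hT
  · by_cases hoff : ∃ i ∉ S, x i ≠ y i
    · obtain ⟨i, hiS, hxy⟩ := hoff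
      have hiT : i ∉ T := fun hiT => hxy (congrFun hT ⟨i, hiT⟩)
      rw [hA.1 x y ⟨i, hiS, hxy⟩, hA.1 _ _ ⟨i, hiS, by rwa [hout x i hiT, hout y i hiT]⟩]
    · have hoff : ∀ i ∉ S, x i = y i := fun i hi => by_contra fun hxy => hoff ⟨i, hi, hxy⟩
      refine hA.2 _ _ _ _ (fun i hi => ?_) (fun i hi => ?_) hoff (fun i hi => ?_)
      · rw [hout x i (Finset.disjoint_left.1 hST hi)]
      · rw [hout y i (Finset.disjoint_left.1 hST hi)]
      · by_cases hiT : i ∈ T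
        · rw [hin x i hiT, hin y i hiT]
        · rw [hout x i hiT, hout y i hiT, hoff i hi]
  · obtain ⟨⟨i, hiT⟩, hxy⟩ := Function.ne_iff.1 hT
    exact hA.1 x y ⟨i, Finset.disjoint_right.1 hST hiT, hxy⟩

theorem stmt_13_general (n m k : ℕ) (hn : 1 ≤ n) (ε : ℝ) (hε : 0 < ε)
    (h : Fin m → Matrix (Fin n → Fin 2) (Fin n → Fin 2) ℂ)
    (hherm : ∀ α, (h α).IsHermitian)
    (hloc : ∀ α, ∃ S : Finset (Fin n), S.card = k ∧ LocalTo (h α) S)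
    (M : ℝ) (hM : M = ∑ α, ‖Matrix.toEuclideanCLM (𝕜 := ℂ) (h α)‖) :
    ∀ hH : (∑ α, h α).IsHermitian,
      2 ^ (⌊ε * n / (2 * k + ε)⌋₊) ≤
        (Finset.univ.filter fun v => hH.eigenvalues v ≤
          (⨅ w, hH.eigenvalues w) + ε * M).card := by
  intro hH
  choose S hScard hSloc using hloc
  set w : Fin m → ℝ := fun α => ‖toEuclideanCLM (𝕜 := ℂ) (h α)‖
  set d := ⌊ε * n / (2 * k + ε)⌋₊
  have hd : (d : ℝ) * (2 * k + ε) ≤ ε * n :=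
    (le_div_iff₀ (by positivity)).1 (Nat.floor_le (by positivity))
  have hdn : d ≤ n := by exact_mod_cast (show (d : ℝ) ≤ n by nlinarith)
  obtain ⟨T, hTd, hT⟩ := exists_card_eq_card_mul_sum_not_disjoint_le S hScard
    (w := w) (fun α => norm_nonneg _) (hdn.trans_eq (Fintype.card_fin n).symm)
  rw [Fintype.card_fin, ← hM] at hT
  have hbad : 2 * ∑ α with ¬Disjoint (S α) T, w α ≤ ε * M := by
    have hM0 : 0 ≤ M := hM ▸ sum_nonneg fun α _ => norm_nonneg _
    refine le_of_mul_le_mul_left ?_ (show (0 : ℝ) < n by exact_mod_cast hn)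
    nlinarith [mul_le_mul_of_nonneg_right hd hM0,
      mul_nonneg (mul_nonneg (Nat.cast_nonneg d) hε.le) hM0]
  have hgood : ActsTriviallyOn T (∑ α with Disjoint (S α) T, h α) :=
    ActsTriviallyOn.sum fun α hα => (hSloc α).actsTriviallyOn (mem_filter.1 hα).2
  have hcount := card_le_card_eigenvalues_le_of_eq_one_kronecker_add hH
    (R := restrictOutside T (∑ α with Disjoint (S α) T, h α))
    (B := ∑ α with ¬Disjoint (S α) T, h α) (W := ∑ α with ¬Disjoint (S α) T, w α)
    (IsHermitian.submatrix (isSelfAdjoint_sum _ fun α _ => hherm α) _) _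
    (by rw [← sum_filter_add_sum_filter_not univ (fun α => Disjoint (S α) T), ← hgood])
    (by rw [map_sum]; exact norm_sum_le _ _)
  calc 2 ^ d = Fintype.card ({i // i ∈ T} → Fin 2) := by simp [hTd]
    _ ≤ _ := hcount
    _ ≤ _ := card_le_card (monotone_filter_right _ fun v _ hv => by linarith)

theorem stmt_13 (n m k : ℕ) (hn : 1 ≤ n) (hk : 1 ≤ k) (ε : ℝ) (hε : 0 < ε)
    (h : Fin m → Matrix (Fin n → Fin 2) (Fin n → Fin 2) ℂ)
    (hherm : ∀ α, (h α).IsHermitian)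
    (hloc : ∀ α, ∃ S : Finset (Fin n), S.card = k ∧ LocalTo (h α) S)
    (M : ℝ) (hM : M = ∑ α, ‖Matrix.toEuclideanCLM (𝕜 := ℂ) (h α)‖) :
    ∀ hH : (∑ α, h α).IsHermitian,
      2 ^ (⌊ε * n / (2 * k + ε)⌋₊) ≤
        (Finset.univ.filter fun v => hH.eigenvalues v ≤
          (⨅ w, hH.eigenvalues w) + ε * M).card :=
  stmt_13_general n m k hn ε hε h hherm hloc M hM
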